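/- Let 𝒯 = Σ_k p_k r_k s_kᵀ where p_k ≥ 0, Σ_k p_k = 1, and r_k, s_k ∈ ℝⁿ with |r_k|, |s_k| ≤ √(2(N−1)/N) (n = N²−1). Suppose also r = Σ_k p_k r_k and s = Σ_k p_k s_k. Then the Ky Fan norm (sum of singular values) satisfies ||𝒯||_KF ≤ 2(N−1)/N − ½(|r| − |s|)². -/

import Mathlib

open Matrix

/-- The positive semidefinite square root of a positive semidefinite matrix
(the former `Matrix.PosSemidef.sqrt`, removed from Mathlib). -/
noncomputable def posSemidefSqrtOld {n : ℕ} {A : Matrix (Fin n) (Fin n) ℝ} (hA : A.PosSemidef) :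
    Matrix (Fin n) (Fin n) ℝ :=
  hA.1.eigenvectorUnitary.1 * diagonal ((↑) ∘ (√·) ∘ hA.1.eigenvalues) *
    (star hA.1.eigenvectorUnitary : Matrix (Fin n) (Fin n) ℝ)

/-- The Ky Fan (trace) norm of a real square matrix: the sum of its singular values,
i.e. the trace of the positive square root of TᵀT. -/
noncomputable def kyFanNorm {n : ℕ} (T : Matrix (Fin n) (Fin n) ℝ) : ℝ :=
  Matrix.trace (posSemidefSqrtOld (Matrix.posSemidef_conjTranspose_mul_self T))

/- ## Auxiliary lemmas -/

lemma jensen_sq {K : ℕ} (p z : Fin K → ℝ) (hp : ∀ k, 0 ≤ p k) (hp1 : ∑ k, p k = 1) :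
    (∑ k, p k * z k)^2 ≤ ∑ k, p k * (z k)^2 := by
  have h := Finset.sum_mul_sq_le_sq_mul_sq Finset.univ (fun k => Real.sqrt (p k))
    (fun k => Real.sqrt (p k) * z k)
  calc (∑ k, p k * z k)^2 = (∑ k, Real.sqrt (p k) * (Real.sqrt (p k) * z k))^2 := by
        congr 1; apply Finset.sum_congr rfl; intro k _
        rw [← mul_assoc, Real.mul_self_sqrt (hp k)]
    _ ≤ (∑ k, Real.sqrt (p k)^2) * (∑ k, (Real.sqrt (p k) * z k)^2) := h
    _ = ∑ k, p k * (z k)^2 := by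
        rw [show (∑ k, Real.sqrt (p k)^2) = 1 by
          rw [← hp1]; apply Finset.sum_congr rfl; intro k _; exact Real.sq_sqrt (hp k), one_mul]
        apply Finset.sum_congr rfl; intro k _
        rw [mul_pow, Real.sq_sqrt (hp k)]

/-- The analytic core of the argument. -/
lemma core {m K : ℕ} (p : Fin K → ℝ) (hp : ∀ k, 0 ≤ p k) (hp1 : ∑ k, p k = 1)
    (x y : Fin K → Fin m → ℝ) (R2 : ℝ)
    (hx : ∀ k, ∑ i, (x k i)^2 ≤ R2) (hy : ∀ k, ∑ i, (y k i)^2 ≤ R2)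
    (X Y : Fin m → ℝ) (hX : ∀ i, X i = ∑ k, p k * x k i) (hY : ∀ i, Y i = ∑ k, p k * y k i)
    (a b : ℝ) (ha0 : 0 ≤ a) (hb0 : 0 ≤ b)
    (ha : a^2 = ∑ i, (X i)^2) (hb : b^2 = ∑ i, (Y i)^2) :
    ∑ k, p k * ∑ i, x k i * y k i ≤ R2 - (1/2) * (a - b)^2 := by
  have step1 : ∀ k, ∑ i, x k i * y k i ≤ R2 - (1/2) * ∑ i, (x k i - y k i)^2 := by
    intro k
    have : ∑ i, x k i * y k i
        = (1/2) * (∑ i, (x k i)^2) + (1/2) * (∑ i, (y k i)^2)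
          - (1/2) * ∑ i, (x k i - y k i)^2 := by
      rw [Finset.mul_sum, Finset.mul_sum, Finset.mul_sum, ← Finset.sum_add_distrib,
        ← Finset.sum_sub_distrib]
      apply Finset.sum_congr rfl; intro i _; ring
    rw [this]
    nlinarith [hx k, hy k]
  have swap : ∑ k, p k * ∑ i, (x k i - y k i)^2
      = ∑ i, ∑ k, p k * (x k i - y k i)^2 := by
    rw [← Finset.sum_comm]
    apply Finset.sum_congr rfl; intro k _
    rw [Finset.mul_sum]
  have step2 : ∑ k, p k * ∑ i, x k i * y k i
      ≤ R2 - (1/2) * ∑ i, ∑ k, p k * (x k i - y k i)^2 := by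
    calc ∑ k, p k * ∑ i, x k i * y k i
        ≤ ∑ k, p k * (R2 - (1/2) * ∑ i, (x k i - y k i)^2) := by
          apply Finset.sum_le_sum; intro k _
          exact mul_le_mul_of_nonneg_left (step1 k) (hp k)
      _ = (∑ k, p k) * R2 - (1/2) * ∑ k, p k * ∑ i, (x k i - y k i)^2 := by
          rw [Finset.sum_mul, Finset.mul_sum, ← Finset.sum_sub_distrib]
          apply Finset.sum_congr rfl; intro k _; ring
      _ = R2 - (1/2) * ∑ i, ∑ k, p k * (x k i - y k i)^2 := by rw [hp1, one_mul, swap]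
  have step3 : ∀ i, (X i - Y i)^2 ≤ ∑ k, p k * (x k i - y k i)^2 := by
    intro i
    have h := jensen_sq p (fun k => x k i - y k i) hp hp1
    have : X i - Y i = ∑ k, p k * (x k i - y k i) := by
      rw [hX i, hY i, ← Finset.sum_sub_distrib]
      apply Finset.sum_congr rfl; intro k _; ring
    rw [this]; exact h
  have step4 : (a - b)^2 ≤ ∑ i, (X i - Y i)^2 := by
    have hcs := Finset.sum_mul_sq_le_sq_mul_sq Finset.univ X Y
    have hXY : ∑ i, X i * Y i ≤ a * b := by
      have h1 : (∑ i, X i * Y i)^2 ≤ (a*b)^2 := by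
        rw [mul_pow, ha, hb]; exact hcs
      nlinarith [mul_nonneg ha0 hb0]
    have hexp : ∑ i, (X i - Y i)^2 = a^2 - 2 * (∑ i, X i * Y i) + b^2 := by
      rw [ha, hb, Finset.mul_sum, ← Finset.sum_sub_distrib, ← Finset.sum_add_distrib]
      apply Finset.sum_congr rfl; intro i _; ring
    nlinarith
  have : (a-b)^2 ≤ ∑ i, ∑ k, p k * (x k i - y k i)^2 :=
    le_trans step4 (Finset.sum_le_sum fun i _ => step3 i)
  nlinarith [step2]

lemma dot_eq_inner {m : ℕ} (x y : EuclideanSpace ℝ (Fin m)) :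
    (inner ℝ x y : ℝ) = ⇑x ⬝ᵥ ⇑y := by
  simp [PiLp.inner_apply, dotProduct, mul_comm]

lemma parseval {m : ℕ} (b : OrthonormalBasis (Fin m) ℝ (EuclideanSpace ℝ (Fin m)))
    (w : Fin m → ℝ) : ∑ i, (⇑(b i) ⬝ᵥ w)^2 = w ⬝ᵥ w := by
  have h := b.sum_inner_mul_inner ((WithLp.equiv 2 (Fin m → ℝ)).symm w)
    ((WithLp.equiv 2 (Fin m → ℝ)).symm w)
  have h2 : ∀ i : Fin m, (inner ℝ (b i) ((WithLp.equiv 2 (Fin m → ℝ)).symm w) : ℝ)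
      = ⇑(b i) ⬝ᵥ w := fun i => dot_eq_inner (b i) _
  have h3 : ∀ i : Fin m, (inner ℝ ((WithLp.equiv 2 (Fin m → ℝ)).symm w) (b i) : ℝ)
      = ⇑(b i) ⬝ᵥ w := fun i => (real_inner_comm _ _).trans (h2 i)
  simp only [h2, h3, ← sq] at h
  rw [h, dot_eq_inner]
  rfl

/-- Key representation: the Ky Fan norm is realised by a pair of orthonormal bases. -/
lemma kyFan_exists_bases {m : ℕ} (T : Matrix (Fin m) (Fin m) ℝ) :
    ∃ b v : OrthonormalBasis (Fin m) ℝ (EuclideanSpace ℝ (Fin m)),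
      kyFanNorm T = ∑ i, ⇑(b i) ⬝ᵥ (T *ᵥ ⇑(v i)) := by
  have hps := Matrix.posSemidef_conjTranspose_mul_self T
  set μ := hps.1.eigenvalues with hμdef
  set v := hps.1.eigenvectorBasis with hvdef
  have hμ0 : ∀ i, 0 ≤ μ i := hps.eigenvalues_nonneg
  have htr : kyFanNorm T = ∑ i, Real.sqrt (μ i) := by
    rw [kyFanNorm, posSemidefSqrtOld, trace_mul_cycle,
      (Matrix.mem_unitaryGroup_iff').mp (hps.1.eigenvectorUnitary).2]
    simp [Matrix.trace_diagonal]
    rfl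
  have horth : ∀ i j, ⇑(v i) ⬝ᵥ ⇑(v j) = if i = j then 1 else 0 := by
    intro i j
    rw [← dot_eq_inner]
    exact orthonormal_iff_ite.mp v.orthonormal i j
  have hμ2 : ∀ i j, (T *ᵥ ⇑(v i)) ⬝ᵥ (T *ᵥ ⇑(v j)) = μ j * (if i = j then 1 else 0) := by
    intro i j
    have h1 : T *ᵥ ⇑(v i) = ⇑(v i) ᵥ* Tᵀ := (Matrix.vecMul_transpose T ⇑(v i)).symm
    rw [h1, Matrix.dotProduct_mulVec, Matrix.vecMul_vecMul,
      ← Matrix.dotProduct_mulVec, show Tᵀ * T = Tᴴ * T from rfl,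
      hps.1.mulVec_eigenvectorBasis j]
    rw [dotProduct_smul, horth i j, smul_eq_mul]
  set u : Fin m → EuclideanSpace ℝ (Fin m) :=
    fun i => (Real.sqrt (μ i))⁻¹ • (WithLp.equiv 2 (Fin m → ℝ)).symm (T *ᵥ ⇑(v i)) with hudef
  have hudot : ∀ i j, ⇑(u i) ⬝ᵥ ⇑(u j)
      = (Real.sqrt (μ i))⁻¹ * ((Real.sqrt (μ j))⁻¹ * (μ j * (if i = j then 1 else 0))) := by
    intro i j
    rw [← hμ2 i j]
    show ((Real.sqrt (μ i))⁻¹ • (T *ᵥ ⇑(v i))) ⬝ᵥ ((Real.sqrt (μ j))⁻¹ • (T *ᵥ ⇑(v j)))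
      = _
    rw [smul_dotProduct, dotProduct_smul, smul_eq_mul, smul_eq_mul]
  have hu_on : Orthonormal ℝ (Set.restrict {i | μ i ≠ 0} u) := by
    rw [orthonormal_iff_ite]
    rintro ⟨i, hi⟩ ⟨j, hj⟩
    rw [dot_eq_inner]
    show ⇑(u i) ⬝ᵥ ⇑(u j) = _
    rw [hudot i j]
    by_cases hij : i = j
    · subst hij
      simp only [if_pos rfl, mul_one]
      have hμpos : 0 < μ i := lt_of_le_of_ne (hμ0 i) (Ne.symm hi)
      have hs : Real.sqrt (μ i) ≠ 0 := ne_of_gt (Real.sqrt_pos.mpr hμpos)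
      rw [show μ i = Real.sqrt (μ i) * Real.sqrt (μ i) from (Real.mul_self_sqrt (hμ0 i)).symm]
      field_simp
      rw [Real.sqrt_sq (Real.sqrt_nonneg (μ i))]
    · have : (⟨i, hi⟩ : {i | μ i ≠ 0}) ≠ ⟨j, hj⟩ := fun h => hij (congrArg Subtype.val h)
      rw [if_neg hij, if_neg this]
      ring
  obtain ⟨b, hb⟩ := hu_on.exists_orthonormalBasis_extension_of_card_eq
    (by simp [finrank_euclideanSpace])
  refine ⟨b, v, ?_⟩
  rw [htr]
  apply Finset.sum_congr rfl
  intro i _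
  by_cases hi : μ i = 0
  · have hTv : T *ᵥ ⇑(v i) = 0 := by
      have := hμ2 i i
      rw [if_pos rfl, hi, zero_mul] at this
      exact dotProduct_self_eq_zero.mp this
    rw [hi, Real.sqrt_zero, hTv, dotProduct_zero]
  · rw [hb i hi]
    show Real.sqrt (μ i) = ((Real.sqrt (μ i))⁻¹ • (T *ᵥ ⇑(v i))) ⬝ᵥ (T *ᵥ ⇑(v i))
    rw [smul_dotProduct, hμ2 i i, if_pos rfl, mul_one, smul_eq_mul]
    have hμpos : 0 < μ i := lt_of_le_of_ne (hμ0 i) (Ne.symm hi)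
    have hsne : Real.sqrt (μ i) ≠ 0 := ne_of_gt (Real.sqrt_pos.mpr hμpos)
    rw [inv_mul_eq_div, eq_div_iff hsne, Real.mul_self_sqrt (hμ0 i)]

lemma dot_vecMulVec {m : ℕ} (w r s c : Fin m → ℝ) :
    w ⬝ᵥ (vecMulVec r s *ᵥ c) = (w ⬝ᵥ r) * (s ⬝ᵥ c) := by
  have h : ∀ j, (vecMulVec r s *ᵥ c) j = r j * (s ⬝ᵥ c) := by
    intro j
    simp [vecMulVec, mulVec, dotProduct, Finset.mul_sum, mul_assoc]
  simp only [dotProduct, h, Finset.sum_mul]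
  apply Finset.sum_congr rfl; intro j _; ring

lemma dot_sum_smul {m K : ℕ} (w : Fin m → ℝ) (c : Fin K → ℝ) (g : Fin K → Fin m → ℝ) :
    w ⬝ᵥ (∑ k, c k • g k) = ∑ k, c k * (w ⬝ᵥ g k) := by
  simp only [dotProduct, Finset.sum_apply, Pi.smul_apply, smul_eq_mul, Finset.mul_sum]
  rw [Finset.sum_comm]
  apply Finset.sum_congr rfl; intro k _
  apply Finset.sum_congr rfl; intro j _
  ring

lemma sum_smul_mulVec {m K : ℕ} (c : Fin K → ℝ) (A : Fin K → Matrix (Fin m) (Fin m) ℝ)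
    (w : Fin m → ℝ) : (∑ k, c k • A k) *ᵥ w = ∑ k, c k • (A k *ᵥ w) := by
  funext j
  simp only [mulVec, dotProduct, Finset.sum_apply, Matrix.sum_apply, Matrix.smul_apply,
    Pi.smul_apply, smul_eq_mul, Finset.sum_mul, Finset.mul_sum]
  rw [Finset.sum_comm]
  apply Finset.sum_congr rfl; intro k _
  apply Finset.sum_congr rfl; intro j' _
  ring

lemma dot_self_nonneg {m : ℕ} (w : Fin m → ℝ) : 0 ≤ w ⬝ᵥ w :=
  Finset.sum_nonneg fun i _ => mul_self_nonneg (w i)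

/-- Entanglement criterion (Corollary 4): for the correlation matrix of a separable
state, ||𝒯||_KF ≤ 2(N−1)/N − ½(|r| − |s|)². -/
theorem stmt15 (N : ℕ) (hN : 0 < N) (K : ℕ) (p : Fin K → ℝ)
    (hp : ∀ k, 0 ≤ p k) (hp1 : ∑ k, p k = 1)
    (rk sk : Fin K → (Fin (N ^ 2 - 1) → ℝ))
    (hr : ∀ k, rk k ⬝ᵥ rk k ≤ 2 * (N - 1) / N) (hs : ∀ k, sk k ⬝ᵥ sk k ≤ 2 * (N - 1) / N)
    (T : Matrix (Fin (N ^ 2 - 1)) (Fin (N ^ 2 - 1)) ℝ)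
    (hT : T = ∑ k, p k • vecMulVec (rk k) (sk k))
    (r s : Fin (N ^ 2 - 1) → ℝ) (hrr : r = ∑ k, p k • rk k) (hss : s = ∑ k, p k • sk k) :
    kyFanNorm T ≤ 2 * (N - 1) / N - (1 / 2) * (Real.sqrt (r ⬝ᵥ r) - Real.sqrt (s ⬝ᵥ s)) ^ 2 := by
  obtain ⟨b, v, hkf⟩ := kyFan_exists_bases T
  set x : Fin K → Fin (N ^ 2 - 1) → ℝ := fun k i => ⇑(b i) ⬝ᵥ rk k with hxdef
  set y : Fin K → Fin (N ^ 2 - 1) → ℝ := fun k i => sk k ⬝ᵥ ⇑(v i) with hydef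
  have hexpand : ∀ i, ⇑(b i) ⬝ᵥ (T *ᵥ ⇑(v i)) = ∑ k, p k * (x k i * y k i) := by
    intro i
    rw [hT, sum_smul_mulVec, dot_sum_smul]
    apply Finset.sum_congr rfl; intro k _
    rw [dot_vecMulVec]
  have hkf2 : kyFanNorm T = ∑ k, p k * ∑ i, x k i * y k i := by
    rw [hkf]
    simp only [hexpand]
    rw [Finset.sum_comm]
    apply Finset.sum_congr rfl; intro k _
    rw [Finset.mul_sum]
  rw [hkf2]
  have hcomm : ∀ (w c : Fin (N ^ 2 - 1) → ℝ), w ⬝ᵥ c = c ⬝ᵥ w :=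
    fun w c => dotProduct_comm w c
  have hx : ∀ k, ∑ i, (x k i)^2 ≤ 2 * (N - 1) / N := by
    intro k
    rw [show (∑ i, (x k i)^2) = rk k ⬝ᵥ rk k from parseval b (rk k)]
    exact hr k
  have hy : ∀ k, ∑ i, (y k i)^2 ≤ 2 * (N - 1) / N := by
    intro k
    have he : ∀ i, y k i = ⇑(v i) ⬝ᵥ sk k := fun i => hcomm (sk k) ⇑(v i)
    simp only [he]
    rw [parseval v (sk k)]
    exact hs k
  have hX : ∀ i, ⇑(b i) ⬝ᵥ r = ∑ k, p k * x k i := by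
    intro i
    rw [hrr, dot_sum_smul]
  have hY : ∀ i, s ⬝ᵥ ⇑(v i) = ∑ k, p k * y k i := by
    intro i
    rw [hss, hcomm _ ⇑(v i), dot_sum_smul]
    apply Finset.sum_congr rfl; intro k _
    rw [hcomm ⇑(v i) (sk k)]
  have ha : (Real.sqrt (r ⬝ᵥ r))^2 = ∑ i, (⇑(b i) ⬝ᵥ r)^2 := by
    rw [Real.sq_sqrt (dot_self_nonneg r), ← parseval b r]
  have hbb : (Real.sqrt (s ⬝ᵥ s))^2 = ∑ i, (s ⬝ᵥ ⇑(v i))^2 := by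
    rw [Real.sq_sqrt (dot_self_nonneg s), ← parseval v s]
    apply Finset.sum_congr rfl; intro i _
    rw [hcomm s ⇑(v i)]
  exact core p hp hp1 x y (2 * (N - 1) / N) hx hy
    (fun i => ⇑(b i) ⬝ᵥ r) (fun i => s ⬝ᵥ ⇑(v i)) hX hY
    (Real.sqrt (r ⬝ᵥ r)) (Real.sqrt (s ⬝ᵥ s)) (Real.sqrt_nonneg _) (Real.sqrt_nonneg _) ha hbb
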